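/- Let d, t ≥ 1 and let A be a linear operator on (ℂ^d)^{⊗t} satisfying P_[t]·A·P_[t] = A (i.e. A is supported on the symmetric subspace Sym_t(ℂ^d)). If tr(A·(|ψ⟩⟨ψ|)^{⊗t}) = 0 for every vector ψ ∈ ℂ^d, then A = 0. (Hence the polarization map A ↦ p_A with p_A(ψ) := tr(A·(|ψ⟩⟨ψ|)^{⊗t}) is a linear isomorphism between operators on Sym_t(ℂ^d) and polynomials on ℂ^d homogeneous of bi-degree (t,t) in the coordinates of ψ and their complex conjugates.) -/

import Mathlib

/-!
The function `ψ ↦ tr(A (|ψ⟩⟨ψ|)^{⊗t})` is the value at `(conj ψ, ψ)` of a polynomial `Q` in `2d`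
independent variables. Substituting `(a - i b, a + i b)` with `a, b` real turns the hypothesis
into the vanishing of a polynomial on all of `ℝ^{2d}`, so `Q = 0`. Since `P_[t] A P_[t] = A`,
the entries of `A` are invariant under permuting the tensor factors of the row and of the column
index, so each coefficient of `Q` is a positive multiple of a single entry of `A`; hence `A = 0`.
-/

open scoped BigOperators

noncomputable section

/-- `t`-fold tensor (Kronecker) power of a matrix, acting on `(ℂ^α)^{⊗t}`. -/
def tpow {α : Type*} [Fintype α] (M : Matrix α α ℂ) (t : ℕ) :
    Matrix (Fin t → α) (Fin t → α) ℂ :=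
  Matrix.of fun x y => ∏ i, M (x i) (y i)

/-- The rank-one operator `|ψ⟩⟨ψ|`. -/
def rankOne {α : Type*} (ψ : α → ℂ) : Matrix α α ℂ :=
  Matrix.of fun i j => ψ i * (starRingEnd ℂ) (ψ j)

/-- The operator `U_σ` permuting the `t` tensor factors of `(ℂ^α)^{⊗t}`. -/
def permOp (α : Type*) [DecidableEq α] {t : ℕ} (σ : Equiv.Perm (Fin t)) :
    Matrix (Fin t → α) (Fin t → α) ℂ :=
  Matrix.of fun x y => if (fun k => x (σ k)) = y then 1 else 0

/-- The projector `P_[t]` onto the symmetric subspace `Sym_t(ℂ^α)`. -/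
def symProj (α : Type*) [DecidableEq α] (t : ℕ) :
    Matrix (Fin t → α) (Fin t → α) ℂ :=
  (t.factorial : ℂ)⁻¹ • ∑ σ : Equiv.Perm (Fin t), permOp α σ

open Finset MvPolynomial ComplexConjugate

section SymmetricSubspace

variable {α : Type*} [DecidableEq α] {t : ℕ}

lemma symProj_apply_comp_left (σ : Equiv.Perm (Fin t)) (x z : Fin t → α) :
    symProj α t (x ∘ σ) z = symProj α t x z := by
  simp only [symProj, permOp, Matrix.smul_apply, Matrix.sum_apply, Matrix.of_apply]
  congr 1
  exact Equiv.sum_comp (Equiv.mulLeft σ) fun τ => if (fun k => x (τ k)) = z then 1 else 0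

lemma symProj_apply_comm (x z : Fin t → α) : symProj α t x z = symProj α t z x := by
  simp only [symProj, permOp, Matrix.smul_apply, Matrix.sum_apply, Matrix.of_apply]
  congr 1
  refine Fintype.sum_equiv (Equiv.inv _) _ _ fun σ => if_congr ?_ rfl rfl
  constructor <;> rintro rfl <;> funext k <;> simp

lemma symProj_apply_comp_right (σ : Equiv.Perm (Fin t)) (x z : Fin t → α) :
    symProj α t x (z ∘ σ) = symProj α t x z := by
  rw [symProj_apply_comm, symProj_apply_comp_left, symProj_apply_comm]

variable [Fintype α]

lemma apply_comp_perm_of_symProj_mul_mul_symProj_eq {A : Matrix (Fin t → α) (Fin t → α) ℂ}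
    (hA : symProj α t * A * symProj α t = A) (σ τ : Equiv.Perm (Fin t)) (x y : Fin t → α) :
    A (x ∘ σ) (y ∘ τ) = A x y := by
  rw [← hA]
  simp only [Matrix.mul_apply, symProj_apply_comp_left, symProj_apply_comp_right]

end SymmetricSubspace

lemma MvPolynomial.eq_zero_of_forall_eval_sumElim_conj_eq_zero {ι : Type*}
    {P : MvPolynomial (ι ⊕ ι) ℂ} (h : ∀ ψ : ι → ℂ, eval (Sum.elim (conj ∘ ψ) ψ) P = 0) :
    P = 0 := by
  let sub : ι ⊕ ι → MvPolynomial (ι ⊕ ι) ℂ :=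
    Sum.elim (fun j => X (.inl j) - C Complex.I * X (.inr j))
      (fun j => X (.inl j) + C Complex.I * X (.inr j))
  have eval_bind₁_sub (g : ι ⊕ ι → ℂ) :
      eval g (bind₁ sub P) = eval (fun i => eval g (sub i)) P :=
    eval₂Hom_bind₁ _ _ _ _
  have hQ : bind₁ sub P = 0 := by
    refine funext_set (fun _ => Set.range Complex.ofReal)
      (fun _ => Set.infinite_range_of_injective Complex.ofReal_injective) fun v hv => ?_
    choose r hr using fun i => hv i (Set.mem_univ i)
    let ψ : ι → ℂ := fun j => v (.inl j) + Complex.I * v (.inr j)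
    have hvψ : (fun i => eval v (sub i)) = Sum.elim (conj ∘ ψ) ψ := by
      funext i
      rcases i with j | j
      · simp [sub, ψ, ← hr, sub_eq_add_neg]
      · simp [sub, ψ]
    rw [eval_bind₁_sub, hvψ, map_zero, h]
  refine funext fun g => ?_
  let g' : ι ⊕ ι → ℂ := Sum.elim (fun j => (g (.inl j) + g (.inr j)) / 2)
    (fun j => (g (.inr j) - g (.inl j)) / (2 * Complex.I))
  have hg : (fun i => eval g' (sub i)) = g := by
    funext i
    rcases i with j | j <;>
      simp only [sub, g', Sum.elim_inl, Sum.elim_inr, map_add, map_sub, map_mul, eval_X, eval_C] <;>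
      field_simp <;> ring
  rw [map_zero, ← hg, ← eval_bind₁_sub, hQ, map_zero]

lemma Equiv.Perm.exists_eq_comp_of_card_fiber_eq {ι α : Type*} [Fintype ι] [DecidableEq α]
    {x x₀ : ι → α} (h : ∀ j, #{i | x i = j} = #{i | x₀ i = j}) :
    ∃ σ : Equiv.Perm ι, x = x₀ ∘ σ := by
  have hcard (j : α) : Fintype.card {i // x i = j} = Fintype.card {i // x₀ i = j} := by
    simpa only [Fintype.card_subtype] using h j
  let e (j : α) : {i // x i = j} ≃ {i // x₀ i = j} := Fintype.equivOfCardEq (hcard j)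
  exact ⟨Equiv.ofFiberEquiv e, funext fun k => (Equiv.ofFiberEquiv_map e k).symm⟩

section PolarPolynomial

variable {α : Type*} {t : ℕ}

def biExponent (x y : Fin t → α) : (α ⊕ α) →₀ ℕ :=
  ∑ i, Finsupp.single (.inl (x i)) 1 + ∑ i, Finsupp.single (.inr (y i)) 1

lemma eval_monomial_biExponent (g : α ⊕ α → ℂ) (x y : Fin t → α) (a : ℂ) :
    eval g (monomial (biExponent x y) a) = a * ((∏ i, g (.inl (x i))) * ∏ i, g (.inr (y i))) := by
  rw [eval_monomial, biExponent,
    Finsupp.prod_add_index' (fun _ => pow_zero _) fun _ _ _ => pow_add _ _ _,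
    ← Finsupp.prod_finsetSum_index (fun _ => pow_zero _) fun _ _ _ => pow_add _ _ _,
    ← Finsupp.prod_finsetSum_index (fun _ => pow_zero _) fun _ _ _ => pow_add _ _ _]
  simp only [Finsupp.prod_single_index, pow_zero, pow_one]

section

variable [DecidableEq α]

lemma biExponent_apply_inl (x y : Fin t → α) (j : α) :
    biExponent x y (.inl j) = #{i | x i = j} := by
  simp [biExponent, Finsupp.single_apply]

lemma biExponent_apply_inr (x y : Fin t → α) (j : α) :
    biExponent x y (.inr j) = #{i | y i = j} := by
  simp [biExponent, Finsupp.single_apply]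

lemma exists_perm_of_biExponent_eq {x y x₀ y₀ : Fin t → α}
    (h : biExponent x y = biExponent x₀ y₀) :
    (∃ σ : Equiv.Perm (Fin t), x = x₀ ∘ σ) ∧ ∃ τ : Equiv.Perm (Fin t), y = y₀ ∘ τ :=
  ⟨Equiv.Perm.exists_eq_comp_of_card_fiber_eq fun j => by
      simpa only [biExponent_apply_inl] using DFunLike.congr_fun h (.inl j),
    Equiv.Perm.exists_eq_comp_of_card_fiber_eq fun j => by
      simpa only [biExponent_apply_inr] using DFunLike.congr_fun h (.inr j)⟩

end

variable [Fintype α]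

/-- The variable `inl j` stands for `conj ψ_j` and `inr j` for `ψ_j`, so that
`tr(A (|ψ⟩⟨ψ|)^{⊗t})` is the value of `polarPoly A` at `(conj ψ, ψ)`. -/
def polarPoly (A : Matrix (Fin t → α) (Fin t → α) ℂ) : MvPolynomial (α ⊕ α) ℂ :=
  ∑ x, ∑ y, monomial (biExponent x y) (A x y)

lemma trace_mul_tpow_rankOne (A : Matrix (Fin t → α) (Fin t → α) ℂ) (ψ : α → ℂ) :
    (A * tpow (rankOne ψ) t).trace = eval (Sum.elim (conj ∘ ψ) ψ) (polarPoly A) := by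
  simp only [polarPoly, map_sum, eval_monomial_biExponent]
  simp only [Matrix.trace, Matrix.diag, Matrix.mul_apply, tpow, rankOne, Matrix.of_apply,
    Sum.elim_inl, Sum.elim_inr, Function.comp_apply, prod_mul_distrib]
  exact sum_congr rfl fun x _ => sum_congr rfl fun y _ => by ring

lemma coeff_biExponent_polarPoly [DecidableEq α] {A : Matrix (Fin t → α) (Fin t → α) ℂ}
    (hA : ∀ (σ τ : Equiv.Perm (Fin t)) (x y : Fin t → α), A (x ∘ σ) (y ∘ τ) = A x y)
    (x₀ y₀ : Fin t → α) :
    coeff (biExponent x₀ y₀) (polarPoly A)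
      = #{p : (Fin t → α) × (Fin t → α) | biExponent p.1 p.2 = biExponent x₀ y₀} • A x₀ y₀ := by
  simp only [polarPoly, coeff_sum, coeff_monomial]
  rw [← Fintype.sum_prod_type', ← sum_filter]
  refine sum_eq_card_nsmul fun p hp => ?_
  obtain ⟨⟨σ, hσ⟩, τ, hτ⟩ := exists_perm_of_biExponent_eq (mem_filter.mp hp).2
  rw [hσ, hτ, hA]

end PolarPolynomial

theorem stmt19 (d t : ℕ)
    (A : Matrix (Fin t → Fin d) (Fin t → Fin d) ℂ)
    (hsupp : symProj (Fin d) t * A * symProj (Fin d) t = A)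
    (hvanish : ∀ ψ : Fin d → ℂ, Matrix.trace (A * tpow (rankOne ψ) t) = 0) :
    A = 0 := by
  have hpoly : polarPoly A = 0 := eq_zero_of_forall_eval_sumElim_conj_eq_zero fun ψ => by
    rw [← trace_mul_tpow_rankOne, hvanish]
  ext x₀ y₀
  have hcoeff := coeff_biExponent_polarPoly
    (apply_comp_perm_of_symProj_mul_mul_symProj_eq hsupp) x₀ y₀
  rw [hpoly, coeff_zero, eq_comm, smul_eq_zero] at hcoeff
  exact hcoeff.resolve_left (card_ne_zero_of_mem (a := (x₀, y₀)) (by simp))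

end
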